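/- arXiv:2412.18730 — 4 statements merged into one kernel-verified Lean document; each statement's English description precedes it below -/
import Mathlib

section
/- Let Ω ⊆ ℝ^d be a closed set, x ∉ Σ_Ω (the medial axis of Ω), and let x_Ω = proj_Ω(x). If t > 0 satisfies proj_Ω(x_Ω + t·(x - x_Ω)/‖x - x_Ω‖) = x_Ω, then for every b ∈ Ω we have ⟨x - x_Ω, x_Ω - b⟩ ≥ -‖x_Ω - b‖² · ‖x - x_Ω‖ / (2t). -/
open Metric

/-- If `xΩ` is the unique nearest point in the closed set `Ω` to `x`
(i.e. `x` is not on the medial axis and `xΩ = proj_Ω x`), and `t > 0` is such that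
the point `xΩ + t • (x - xΩ)/‖x - xΩ‖` also has `xΩ` as its (unique) nearest point in `Ω`,
then for every `b ∈ Ω`, `⟨x - xΩ, xΩ - b⟩ ≥ -‖xΩ - b‖² ‖x - xΩ‖ / (2 t)`. -/
theorem stmt0 {d : ℕ} (Ω : Set (EuclideanSpace ℝ (Fin d))) (hΩ : IsClosed Ω)
    (x xΩ : EuclideanSpace ℝ (Fin d))
    (hxΩ : xΩ ∈ Ω) (hnear : ∀ y ∈ Ω, dist x xΩ ≤ dist x y)
    (huniq : ∀ w, w ∈ Ω → (∀ y ∈ Ω, dist x w ≤ dist x y) → w = xΩ)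
    (t : ℝ) (ht : 0 < t)
    (hprojnear : ∀ y ∈ Ω,
      dist (xΩ + (t / ‖x - xΩ‖) • (x - xΩ)) xΩ ≤ dist (xΩ + (t / ‖x - xΩ‖) • (x - xΩ)) y)
    (hprojuniq : ∀ w, w ∈ Ω →
      (∀ y ∈ Ω, dist (xΩ + (t / ‖x - xΩ‖) • (x - xΩ)) w
          ≤ dist (xΩ + (t / ‖x - xΩ‖) • (x - xΩ)) y) → w = xΩ)
    (b : EuclideanSpace ℝ (Fin d)) (hb : b ∈ Ω) :
    (inner ℝ (x - xΩ) (xΩ - b) : ℝ) ≥ -(‖xΩ - b‖ ^ 2 * ‖x - xΩ‖) / (2 * t) := by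
  by_cases hx : x = xΩ
  · simp [hx]
  · have hnorm : (0:ℝ) < ‖x - xΩ‖ := by
      rw [norm_pos_iff]
      exact sub_ne_zero.mpr hx
    set s : ℝ := t / ‖x - xΩ‖ with hs_def
    have hs : 0 < s := div_pos ht hnorm
    have key := hprojnear b hb
    rw [dist_eq_norm, dist_eq_norm] at key
    have h1 : xΩ + s • (x - xΩ) - xΩ = s • (x - xΩ) := by abel
    have h2 : xΩ + s • (x - xΩ) - b = s • (x - xΩ) + (xΩ - b) := by abel
    rw [h1, h2] at key
    have hsq : ‖s • (x - xΩ)‖ ^ 2 ≤ ‖s • (x - xΩ) + (xΩ - b)‖ ^ 2 := by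
      exact pow_le_pow_left₀ (norm_nonneg _) key 2
    rw [norm_add_sq_real] at hsq
    have hinner : (inner ℝ (s • (x - xΩ)) (xΩ - b) : ℝ) = s * inner ℝ (x - xΩ) (xΩ - b) :=
      real_inner_smul_left _ _ _
    rw [hinner] at hsq
    have h3 : 0 ≤ 2 * (s * inner ℝ (x - xΩ) (xΩ - b)) + ‖xΩ - b‖ ^ 2 := by linarith
    have h6 : t / ‖x - xΩ‖ * inner ℝ (x - xΩ) (xΩ - b) * ‖x - xΩ‖
        = t * inner ℝ (x - xΩ) (xΩ - b) := by
      field_simp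
    have h4 : 0 ≤ 2 * (t * inner ℝ (x - xΩ) (xΩ - b)) + ‖xΩ - b‖ ^ 2 * ‖x - xΩ‖ := by
      nlinarith [mul_nonneg h3 hnorm.le]
    rw [ge_iff_le, div_le_iff₀ (by positivity)]
    nlinarith [h4]
end

section
/- Let Ω ⊆ ℝ^d be a closed set and ε > 0. For any points x, y ∈ ℝ^d whose distances to the medial axis Σ_Ω both exceed ε, the projections satisfy ‖proj_Ω(x) - proj_Ω(y)‖ ≤ (max{d_Ω(x), d_Ω(y)}/ε + 1) · ‖x - y‖. -/
open Metric

/-- The medial axis of a set `Ω`: points having more than one nearest point in `Ω`. -/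
def medialAxis {E : Type*} [NormedAddCommGroup E] (Ω : Set E) : Set E :=
  {z | ∃ w₁ ∈ Ω, ∃ w₂ ∈ Ω, w₁ ≠ w₂ ∧
    (∀ y ∈ Ω, dist z w₁ ≤ dist z y) ∧ (∀ y ∈ Ω, dist z w₂ ≤ dist z y)}

open Filter Set Real

set_option maxHeartbeats 1000000

section Aux

variable {d : ℕ}

local notation "E" => EuclideanSpace ℝ (Fin d)

private lemma le_infDist' {s : Set E} {x : E} {b : ℝ} (hs : s.Nonempty)
    (h : ∀ y ∈ s, b ≤ dist x y) : b ≤ infDist x s := by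
  by_contra hlt
  push_neg at hlt
  obtain ⟨y, hy, hd⟩ := (infDist_lt_iff hs).1 hlt
  exact absurd (h y hy) (by linarith)

private lemma nearest_unique {Ω : Set E} {z p q : E}
    (hz : z ∉ medialAxis Ω) (hp : p ∈ Ω) (hq : q ∈ Ω)
    (h1 : ∀ y ∈ Ω, dist z p ≤ dist z y) (h2 : ∀ y ∈ Ω, dist z q ≤ dist z y) : p = q := by
  by_contra hne
  exact hz ⟨p, hp, q, hq, hne, h1, h2⟩

/-- Maximum-principle lemma: if the closed `ε`-ball around `x` misses the medial axis,
then on the sphere of radius `ε` there are points whose distance to `Ω` is at least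
`infDist x Ω + s * ε`, for every `s < 1`. -/
private lemma sphere_point {Ω : Set E} (hΩ : IsClosed Ω) (hne : Ω.Nonempty)
    {ε : ℝ} (hε : 0 < ε) {x : E} (hd : 0 < infDist x Ω)
    (hfree : ∀ z ∈ closedBall x ε, z ∉ medialAxis Ω)
    {s : ℝ} (hs0 : 0 ≤ s) (hs1 : s < 1) :
    ∃ z, dist z x = ε ∧ infDist x Ω + s * ε ≤ infDist z Ω := by
  classical
  set F : E → ℝ := fun w => infDist w Ω - s * dist w x with hF
  have hFcont : Continuous F :=
    (continuous_infDist_pt Ω).sub (continuous_const.mul (continuous_id.dist continuous_const))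
  obtain ⟨z, hzK, hmax⟩ := (isCompact_closedBall x ε).exists_isMaxOn
    ⟨x, mem_closedBall_self hε.le⟩ hFcont.continuousOn
  have hFx : F x ≤ F z := hmax (mem_closedBall_self hε.le)
  have hFx' : infDist x Ω ≤ infDist z Ω - s * dist z x := by
    simpa [hF] using hFx
  have hdzx : dist z x ≤ ε := mem_closedBall.1 hzK
  have hD : 0 < infDist z Ω := by
    have := mul_nonneg hs0 (dist_nonneg (x := z) (y := x))
    linarith
  by_cases hzb : dist z x = ε
  · refine ⟨z, hzb, ?_⟩
    rw [hzb] at hFx'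
    linarith
  · exfalso
    have hzlt : dist z x < ε := lt_of_le_of_ne hdzx hzb
    obtain ⟨P, hPΩ, hPd⟩ := hΩ.exists_infDist_eq_dist hne z
    have hPnear : ∀ y ∈ Ω, dist z P ≤ dist z y := fun y hy => by
      rw [← hPd]; exact infDist_le_dist_of_mem hy
    set D := infDist z Ω with hDdef
    have hzP : ‖z - P‖ = D := by rw [← dist_eq_norm, ← hPd]
    set u : E := D⁻¹ • (z - P) with hu
    have hunorm : ‖u‖ = 1 := by
      rw [hu, norm_smul, hzP, norm_inv, Real.norm_eq_abs, abs_of_pos hD]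
      field_simp
    -- choice of nearest points
    have hQ : ∀ w : E, ∃ p, p ∈ Ω ∧ infDist w Ω = dist w p := by
      intro w
      obtain ⟨p, hp1, hp2⟩ := hΩ.exists_infDist_eq_dist hne w
      exact ⟨p, hp1, hp2⟩
    set Q : E → E := fun w => (hQ w).choose with hQdef
    have hQ1 : ∀ w, Q w ∈ Ω := fun w => (hQ w).choose_spec.1
    have hQ2 : ∀ w, infDist w Ω = dist w (Q w) := fun w => (hQ w).choose_spec.2
    set η₀ : ℝ := min (ε - dist z x) 1 with hη₀
    have hη₀pos : 0 < η₀ := lt_min (by linarith) one_pos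
    have hη₀1 : η₀ ≤ 1 := min_le_right _ _
    -- Find a small step η with projection of the stepped point close to P
    have hkey : ∃ η : ℝ, 0 < η ∧ η ≤ η₀ ∧ dist (Q (z + η • u)) P < D * (1 - s) := by
      by_contra hcon
      push_neg at hcon
      set w : ℕ → E := fun n => z + (η₀ / (n + 1)) • u with hw
      have hηn : ∀ n : ℕ, 0 < η₀ / (n + 1) ∧ η₀ / (n + 1) ≤ η₀ := by
        intro n
        have hn0 : (0:ℝ) ≤ (n:ℝ) := Nat.cast_nonneg n
        constructor
        · positivity
        · rw [div_le_iff₀ (by positivity)]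
          nlinarith [hη₀pos]
      have hwz : ∀ n : ℕ, dist (w n) z = η₀ / (n + 1) := by
        intro n
        rw [hw]
        simp only [dist_eq_norm, add_sub_cancel_left, norm_smul, hunorm, mul_one,
          Real.norm_eq_abs]
        exact abs_of_pos (hηn n).1
      have hqball : ∀ n : ℕ, Q (w n) ∈ closedBall z (D + 2) := by
        intro n
        have h1 : dist (w n) (Q (w n)) = infDist (w n) Ω := (hQ2 (w n)).symm
        have h2 : infDist (w n) Ω ≤ D + dist (w n) z := infDist_le_infDist_add_dist
        have h3 : dist (Q (w n)) z ≤ dist (Q (w n)) (w n) + dist (w n) z := dist_triangle _ _ _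
        rw [mem_closedBall]
        have h4 := hwz n
        have h5 := (hηn n).2
        rw [dist_comm] at h1
        calc dist (Q (w n)) z ≤ dist (Q (w n)) (w n) + dist (w n) z := h3
          _ = infDist (w n) Ω + dist (w n) z := by rw [h1]
          _ ≤ D + dist (w n) z + dist (w n) z := by linarith
          _ ≤ D + 2 := by rw [h4]; linarith
      obtain ⟨b, hbK, φ, hφ, htend⟩ := (isCompact_closedBall z (D + 2)).tendsto_subseq hqball
      have hbΩ : b ∈ Ω := hΩ.mem_of_tendsto htend (Eventually.of_forall fun k => hQ1 _)
      -- dist z b ≤ D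
      have hdistb : dist z b ≤ D := by
        have htd : Tendsto (fun k => dist z (Q (w (φ k)))) atTop (nhds (dist z b)) :=
          (Continuous.dist continuous_const continuous_id).continuousAt.tendsto.comp htend
        have hbound : ∀ k : ℕ, dist z (Q (w (φ k))) ≤ D + 2 * (η₀ / (k + 1)) := by
          intro k
          have h1 : dist (w (φ k)) (Q (w (φ k))) = infDist (w (φ k)) Ω := (hQ2 _).symm
          have h2 : infDist (w (φ k)) Ω ≤ D + dist (w (φ k)) z := infDist_le_infDist_add_dist
          have h3 : dist z (Q (w (φ k))) ≤ dist z (w (φ k)) + dist (w (φ k)) (Q (w (φ k))) :=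
            dist_triangle _ _ _
          have h4 := hwz (φ k)
          have h5 : (k : ℝ) + 1 ≤ (φ k : ℝ) + 1 := by
            have h5' : (k : ℝ) ≤ (φ k : ℝ) := Nat.cast_le.2 hφ.le_apply
            linarith
          have h6 : η₀ / (φ k + 1) ≤ η₀ / (k + 1) :=
            div_le_div_of_nonneg_left hη₀pos.le (by positivity) h5
          rw [dist_comm z (w (φ k))] at h3
          calc dist z (Q (w (φ k))) ≤ dist (w (φ k)) z + dist (w (φ k)) (Q (w (φ k))) := h3
            _ ≤ dist (w (φ k)) z + (D + dist (w (φ k)) z) := by linarith [h1 ▸ h2]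
            _ = D + 2 * (η₀ / ((φ k : ℝ) + 1)) := by rw [h4]; ring
            _ ≤ D + 2 * (η₀ / (k + 1)) := by linarith
        have hlim : Tendsto (fun k : ℕ => D + 2 * (η₀ / (k + 1))) atTop (nhds D) := by
          have h0 : Tendsto (fun k : ℕ => η₀ / ((k:ℝ) + 1)) atTop (nhds 0) := by
            have := tendsto_one_div_add_atTop_nhds_zero_nat.const_mul η₀
            simpa [div_eq_mul_inv, mul_comm] using this
          have h1 := (tendsto_const_nhds (x := D) (f := atTop (α := ℕ))).add (h0.const_mul 2)
          simpa using h1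
        exact le_of_tendsto_of_tendsto' htd hlim hbound
      have hbnear : ∀ y ∈ Ω, dist z b ≤ dist z y := fun y hy =>
        hdistb.trans (infDist_le_dist_of_mem hy)
      have hbP : b = P :=
        nearest_unique (hfree z hzK) hbΩ hPΩ hbnear hPnear
      have hfar : D * (1 - s) ≤ dist b P := by
        have htd : Tendsto (fun k => dist (Q (w (φ k))) P) atTop (nhds (dist b P)) :=
          (Continuous.dist continuous_id continuous_const).continuousAt.tendsto.comp htend
        refine ge_of_tendsto htd (Eventually.of_forall fun k => ?_)
        exact hcon (η₀ / (φ k + 1)) (hηn (φ k)).1 (hηn (φ k)).2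
      rw [hbP] at hfar
      simp only [dist_self] at hfar
      nlinarith
    obtain ⟨η, hηpos, hηle, hθ⟩ := hkey
    set w := z + η • u with hwdef
    set q := Q w with hqdef
    have hqΩ : q ∈ Ω := hQ1 w
    have hwq : infDist w Ω = dist w q := hQ2 w
    set θd := dist q P with hθd
    have hθd0 : 0 ≤ θd := dist_nonneg
    set N := ‖z - q‖ with hN
    have hzq : D ≤ N := by
      rw [hN, ← dist_eq_norm]
      exact infDist_le_dist_of_mem hqΩ
    set I : ℝ := inner ℝ (z - q) u with hI
    have hinner : D - θd ≤ I := by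
      have h1 : (inner ℝ (z - P) u : ℝ) = D := by
        rw [hu, real_inner_smul_right, real_inner_self_eq_norm_sq, hzP]
        field_simp
      have h2 : -θd ≤ (inner ℝ (P - q) u : ℝ) := by
        have h2a := abs_real_inner_le_norm (P - q) u
        rw [hunorm, mul_one] at h2a
        have h3 : ‖P - q‖ = θd := by rw [hθd, ← dist_eq_norm, dist_comm]
        rw [h3] at h2a
        linarith [neg_abs_le (inner ℝ (P - q) u : ℝ), abs_le.1 h2a]
      have h4 : z - q = (z - P) + (P - q) := by abel
      rw [hI, h4, inner_add_left, h1]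
      linarith
    have hwq2 : (D + s * η) ^ 2 < ‖w - q‖ ^ 2 := by
      have h4 : w - q = (z - q) + η • u := by rw [hwdef]; abel
      have h5 : ‖η • u‖ ^ 2 = η ^ 2 := by
        rw [norm_smul, hunorm, mul_one, Real.norm_eq_abs, sq_abs]
      have hexp : ‖w - q‖ ^ 2 = N ^ 2 + 2 * (η * I) + η ^ 2 := by
        rw [h4, norm_add_sq_real, real_inner_smul_right, h5, ← hN, ← hI]
      rw [hexp]
      have e1 : D ^ 2 ≤ N ^ 2 := by nlinarith [hzq, hD]
      have e2 : 2 * D * s * η < 2 * (η * I) := by nlinarith [hθ, hηpos, hinner]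
      have e3 : s ^ 2 * η ^ 2 ≤ η ^ 2 := by
        have hs2 : s ^ 2 ≤ 1 := by nlinarith
        have := mul_le_mul_of_nonneg_right hs2 (sq_nonneg η)
        linarith
      nlinarith [e1, e2, e3]
    have h1 : 0 ≤ D + s * η := add_nonneg hD.le (mul_nonneg hs0 hηpos.le)
    have hwqgt : D + s * η < infDist w Ω := by
      rw [hwq, dist_eq_norm]
      nlinarith [norm_nonneg (w - q), hwq2]
    have hwz' : dist w z = η := by
      rw [hwdef]
      simp only [dist_eq_norm, add_sub_cancel_left, norm_smul, hunorm, mul_one,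
        Real.norm_eq_abs]
      exact abs_of_pos hηpos
    have hwball : w ∈ closedBall x ε := by
      rw [mem_closedBall]
      have hm := min_le_left (ε - dist z x) 1
      calc dist w x ≤ dist w z + dist z x := dist_triangle _ _ _
        _ = η + dist z x := by rw [hwz']
        _ ≤ ε := by linarith [hηle.trans hm]
    have hFw : F w ≤ F z := hmax hwball
    have hFw' : infDist w Ω - s * dist w x ≤ D - s * dist z x := hFw
    have hdwx : dist w x ≤ η + dist z x := by
      calc dist w x ≤ dist w z + dist z x := dist_triangle _ _ _
        _ = η + dist z x := by rw [hwz']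
    nlinarith [mul_le_mul_of_nonneg_left hdwx hs0]

/-- Key inequality: Federer-style "tangent ball" bound away from the medial axis. -/
private lemma key_ineq {Ω : Set E} (hΩ : IsClosed Ω)
    {ε : ℝ} (hε : 0 < ε) {x px q : E}
    (hpx1 : px ∈ Ω) (hpx2 : ∀ z ∈ Ω, dist x px ≤ dist x z) (hq : q ∈ Ω)
    (hfree : ∀ z ∈ closedBall x ε, z ∉ medialAxis Ω) :
    (inner ℝ (x - px) (q - px) : ℝ) ≤
      infDist x Ω * ‖q - px‖ ^ 2 / (2 * (infDist x Ω + ε)) := by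
  have hne : Ω.Nonempty := ⟨px, hpx1⟩
  have hdx : infDist x Ω = dist x px :=
    le_antisymm (infDist_le_dist_of_mem hpx1) (le_infDist' hne hpx2)
  rcases eq_or_lt_of_le (infDist_nonneg (x := x) (s := Ω)) with h0 | hdxpos
  · -- infDist x Ω = 0 : x = px
    have hxp : x = px := by
      have hd0 : dist x px = 0 := by rw [← hdx]; exact h0.symm
      exact dist_eq_zero.1 hd0
    rw [hxp]
    simp only [sub_self, inner_zero_left]
    exact div_nonneg (mul_nonneg infDist_nonneg (sq_nonneg _))
      (mul_nonneg (by norm_num) (add_nonneg infDist_nonneg hε.le))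
  · -- main case
    set dx := infDist x Ω with hdxdef
    have hdxne : dx ≠ 0 := ne_of_gt hdxpos
    set xl : E := x + (ε / dx) • (x - px) with hxl
    have hxpx : ‖x - px‖ = dx := by rw [← dist_eq_norm, hdx]
    -- Step 1 : dx + ε ≤ ‖xl - q‖
    have hball : dx + ε ≤ ‖xl - q‖ := by
      set g : ℝ → ℝ := fun s =>
        dx + s * ε - Real.sqrt (2 * ε ^ 2 * (1 - s) + (1 - s ^ 2) * ε ^ 3 / dx) with hg
      have hgs : ∀ s : ℝ, 0 ≤ s → s < 1 → g s ≤ ‖xl - q‖ := by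
        intro s hs0 hs1
        obtain ⟨z, hz1, hz2⟩ := sphere_point hΩ hne hε hdxpos hfree hs0 hs1
        have hzx : ‖z - x‖ = ε := by rw [← dist_eq_norm, hz1]
        have hzpx : dx + s * ε ≤ ‖z - px‖ := by
          rw [← dist_eq_norm]
          exact hz2.trans (infDist_le_dist_of_mem hpx1)
        have hzq : dx + s * ε ≤ ‖z - q‖ := by
          rw [← dist_eq_norm]
          exact hz2.trans (infDist_le_dist_of_mem hq)
        set ipz : ℝ := inner ℝ (z - x) (x - px) with hipz
        have hexp : ‖z - px‖ ^ 2 = ε ^ 2 + 2 * ipz + dx ^ 2 := by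
          have h4 : z - px = (z - x) + (x - px) := by abel
          rw [h4, norm_add_sq_real, hzx, hxpx, ← hipz]
        have hip : ((dx + s * ε) ^ 2 - ε ^ 2 - dx ^ 2) / 2 ≤ ipz := by
          have h5 : 0 ≤ dx + s * ε := by positivity
          nlinarith [hexp, hzpx]
        -- distance from z to xl
        have hzxl : ‖z - xl‖ ^ 2 ≤ 2 * ε ^ 2 * (1 - s) + (1 - s ^ 2) * ε ^ 3 / dx := by
          have h4 : z - xl = (z - x) - (ε / dx) • (x - px) := by rw [hxl]; abel
          have hsm : ‖(ε / dx) • (x - px)‖ = ε := by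
            rw [norm_smul, hxpx, Real.norm_eq_abs, abs_of_pos (by positivity)]
            field_simp
          have h5 : ‖z - xl‖ ^ 2 = ε ^ 2 - 2 * ((ε / dx) * ipz) + ε ^ 2 := by
            rw [h4, norm_sub_sq_real, real_inner_smul_right, hsm, hzx, ← hipz]
          rw [h5]
          have h7 : (ε / dx) * (((dx + s * ε) ^ 2 - ε ^ 2 - dx ^ 2) / 2) ≤
              (ε / dx) * ipz :=
            mul_le_mul_of_nonneg_left hip (by positivity)
          have h8 : (ε / dx) * (((dx + s * ε) ^ 2 - ε ^ 2 - dx ^ 2) / 2)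
              = s * ε ^ 2 + (s ^ 2 - 1) * ε ^ 3 / (2 * dx) := by
            field_simp
            ring
          rw [h8] at h7
          have h9 : (1 - s ^ 2) * ε ^ 3 / dx = -2 * ((s ^ 2 - 1) * ε ^ 3 / (2 * dx)) := by
            field_simp
            ring
          rw [h9]
          linarith
        have hzxl' : ‖z - xl‖ ≤ Real.sqrt (2 * ε ^ 2 * (1 - s) + (1 - s ^ 2) * ε ^ 3 / dx) := by
          have h10 := Real.sqrt_le_sqrt hzxl
          rwa [Real.sqrt_sq (norm_nonneg _)] at h10
        have htri : ‖z - q‖ ≤ ‖z - xl‖ + ‖xl - q‖ := by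
          have := dist_triangle z xl q
          simpa [dist_eq_norm] using this
        rw [hg]
        dsimp only
        linarith
      have htend : Tendsto g (nhdsWithin 1 (Set.Iio 1)) (nhds (dx + ε)) := by
        have hgc : Continuous g := by
          rw [hg]
          fun_prop
        have h1 : g 1 = dx + ε := by
          rw [hg]
          norm_num
        have h2 := (hgc.continuousAt (x := (1:ℝ))).tendsto
        rw [h1] at h2
        exact h2.mono_left nhdsWithin_le_nhds
      refine le_of_tendsto htend ?_
      filter_upwards [Ioo_mem_nhdsLT_of_mem (Set.mem_Ioc.2 ⟨zero_lt_one, le_refl (1:ℝ)⟩)]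
        with s hs
      exact hgs s hs.1.le hs.2
    -- Step 2: algebra
    set ip : ℝ := inner ℝ (x - px) (q - px) with hip
    have hxlq : xl - q = (1 + ε / dx) • (x - px) + (px - q) := by
      rw [hxl]
      module
    have hxlq2 : ‖xl - q‖ ^ 2 = (dx + ε) ^ 2
        + 2 * ((1 + ε / dx) * (inner ℝ (x - px) (px - q) : ℝ)) + ‖px - q‖ ^ 2 := by
      rw [hxlq, norm_add_sq_real, real_inner_smul_left, norm_smul, hxpx]
      have h1 : ‖(1:ℝ) + ε / dx‖ * dx = dx + ε := by
        rw [Real.norm_eq_abs, abs_of_pos (by positivity)]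
        field_simp
      rw [h1]
    have hip2 : (inner ℝ (x - px) (px - q) : ℝ) = -ip := by
      rw [hip, ← inner_neg_right]
      congr 1
      abel
    have hpq : ‖px - q‖ = ‖q - px‖ := norm_sub_rev _ _
    rw [hip2, hpq] at hxlq2
    have hsq : (dx + ε) ^ 2 ≤ ‖xl - q‖ ^ 2 := by
      nlinarith [norm_nonneg (xl - q)]
    rw [hxlq2] at hsq
    have hsq' : 2 * ((1 + ε / dx) * ip) ≤ ‖q - px‖ ^ 2 := by linarith
    have hmul := mul_le_mul_of_nonneg_left hsq' hdxpos.le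
    have hexpand : dx * (2 * ((1 + ε / dx) * ip)) = 2 * (dx + ε) * ip := by
      field_simp
    rw [hexpand] at hmul
    rw [le_div_iff₀ (by positivity : (0:ℝ) < 2 * (dx + ε))]
    linarith
end Aux

/-- local Lipschitz continuity of the nearest-point projection away from the
medial axis.  If the local feature sizes of `x` and `y` (their distances to the medial axis,
measured in `[0,∞]` so the empty medial axis is at distance `∞`) both exceed `ε > 0`, and
`px`, `py` are nearest points in the closed set `Ω` to `x`, `y` respectively, then
`‖px - py‖ ≤ (max (d_Ω x) (d_Ω y) / ε + 1) ‖x - y‖`. -/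
theorem stmt3 {d : ℕ} (Ω : Set (EuclideanSpace ℝ (Fin d))) (hΩ : IsClosed Ω)
    (ε : ℝ) (hε : 0 < ε)
    (x y px py : EuclideanSpace ℝ (Fin d))
    (hpx : px ∈ Ω ∧ ∀ z ∈ Ω, dist x px ≤ dist x z)
    (hpy : py ∈ Ω ∧ ∀ z ∈ Ω, dist y py ≤ dist y z)
    (hx : ENNReal.ofReal ε < EMetric.infEdist x (medialAxis Ω))
    (hy : ENNReal.ofReal ε < EMetric.infEdist y (medialAxis Ω)) :
    ‖px - py‖ ≤ (max (infDist x Ω) (infDist y Ω) / ε + 1) * ‖x - y‖ := by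
  obtain ⟨hpx1, hpx2⟩ := hpx
  obtain ⟨hpy1, hpy2⟩ := hpy
  have hfree : ∀ (c : EuclideanSpace ℝ (Fin d)),
      ENNReal.ofReal ε < EMetric.infEdist c (medialAxis Ω) →
      ∀ z ∈ closedBall c ε, z ∉ medialAxis Ω := by
    intro c hc z hzball hzS
    have h1 : EMetric.infEdist c (medialAxis Ω) ≤ edist c z :=
      EMetric.infEdist_le_edist_of_mem hzS
    have h2 : ENNReal.ofReal ε < edist c z := lt_of_lt_of_le hc h1
    rw [edist_dist] at h2
    have h3 : ε < dist c z := (ENNReal.ofReal_lt_ofReal_iff_of_nonneg hε.le).1 h2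
    rw [mem_closedBall, dist_comm] at hzball
    linarith
  have Kx := key_ineq hΩ hε hpx1 hpx2 hpy1 (hfree x hx)
  have Ky := key_ineq hΩ hε hpy1 hpy2 hpx1 (hfree y hy)
  set dx := infDist x Ω with hdx
  set dy := infDist y Ω with hdy
  set v := py - px with hv
  have hvpx : px - py = -v := by rw [hv]; abel
  rw [hvpx] at Ky ⊢
  rw [norm_neg] at Ky ⊢
  set M := max dx dy with hM
  have hdx0 : 0 ≤ dx := infDist_nonneg
  have hdy0 : 0 ≤ dy := infDist_nonneg
  have hM0 : 0 ≤ M := le_trans hdx0 (le_max_left _ _)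
  have hdxM : dx ≤ M := le_max_left _ _
  have hdyM : dy ≤ M := le_max_right _ _
  have hmono : ∀ t : ℝ, 0 ≤ t → t ≤ M →
      t * ‖v‖ ^ 2 / (2 * (t + ε)) ≤ M * ‖v‖ ^ 2 / (2 * (M + ε)) := by
    intro t ht htM
    rw [div_le_div_iff₀ (by positivity) (by positivity)]
    nlinarith [mul_nonneg (mul_nonneg (sub_nonneg.2 htM) (sq_nonneg ‖v‖)) hε.le]
  have hKx' : (inner ℝ (x - px) v : ℝ) ≤ M * ‖v‖ ^ 2 / (2 * (M + ε)) :=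
    Kx.trans (hmono dx hdx0 hdxM)
  have hKy' : (inner ℝ (y - py) (-v) : ℝ) ≤ M * ‖v‖ ^ 2 / (2 * (M + ε)) :=
    Ky.trans (hmono dy hdy0 hdyM)
  have hMε : 0 < M + ε := by positivity
  have hsum : ‖v‖ ^ 2 + (inner ℝ (x - y) v : ℝ) ≤ M * ‖v‖ ^ 2 / (M + ε) := by
    have h1 : (inner ℝ (y - py) (-v) : ℝ) = (inner ℝ (py - y) v : ℝ) := by
      rw [inner_neg_right, ← inner_neg_left]
      congr 1
      abel
    rw [h1] at hKy'
    have h2 : (x - px) + (py - y) = (x - y) + v := by rw [hv]; abel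
    have h3 : (inner ℝ ((x - y) + v) v : ℝ) = (inner ℝ (x - y) v : ℝ) + ‖v‖ ^ 2 := by
      rw [inner_add_left, real_inner_self_eq_norm_sq]
    have h4 : (inner ℝ (x - px) v : ℝ) + (inner ℝ (py - y) v : ℝ)
        = (inner ℝ (x - y) v : ℝ) + ‖v‖ ^ 2 := by
      rw [← inner_add_left, h2, h3]
    have h5 : M * ‖v‖ ^ 2 / (2 * (M + ε)) + M * ‖v‖ ^ 2 / (2 * (M + ε))
        = M * ‖v‖ ^ 2 / (M + ε) := by
      field_simp
      ring
    linarith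
  have hCS : -(‖x - y‖ * ‖v‖) ≤ (inner ℝ (x - y) v : ℝ) := by
    have h6 := abs_real_inner_le_norm (x - y) v
    linarith [neg_abs_le (inner ℝ (x - y) v : ℝ), abs_le.1 h6]
  rcases eq_or_lt_of_le (norm_nonneg v) with hv0 | hvpos
  · rw [← hv0]
    exact mul_nonneg (add_nonneg (div_nonneg hM0 hε.le) one_pos.le) (norm_nonneg _)
  · have h6 : ‖v‖ ^ 2 * ε ≤ ‖x - y‖ * ‖v‖ * (M + ε) := by
      have h5 : M * ‖v‖ ^ 2 / (M + ε) * (M + ε) = M * ‖v‖ ^ 2 :=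
        div_mul_cancel₀ _ (ne_of_gt hMε)
      nlinarith [mul_le_mul_of_nonneg_right hsum hMε.le,
        mul_le_mul_of_nonneg_right hCS hMε.le, h5]
    have h7 : ‖v‖ * ε ≤ ‖x - y‖ * (M + ε) := by
      nlinarith [h6, hvpos]
    have h8 : M / ε + 1 = (M + ε) / ε := by field_simp
    rw [h8, div_mul_eq_mul_div, le_div_iff₀ hε]
    nlinarith [h7]
end

section
/- Let p be a probability measure on ℝ^d with finite second moment. For t ∈ [0,1) with β_t > 0, the denoiser m_t(x) = E[X | X_t = x] is differentiable in x, with Jacobian ∇_x m_t(x) = (α_t/β_t²) · Cov[X | X_t = x]. In particular, the Jacobian of the denoiser is a positive semidefinite symmetric matrix multiplied by α_t/β_t². -/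
open MeasureTheory
/-- The denoiser `m_t(x)`: the mean of the posterior measure with density proportional to
`exp(-‖x - a y‖²/(2 b²))` with respect to the data measure `p`. -/
noncomputable def denoiser {d : ℕ} (p : Measure (EuclideanSpace ℝ (Fin d))) (a b : ℝ)
    (x : EuclideanSpace ℝ (Fin d)) : EuclideanSpace ℝ (Fin d) :=
  (∫ y, Real.exp (-‖x - a • y‖ ^ 2 / (2 * b ^ 2)) ∂p)⁻¹ •
    ∫ y, Real.exp (-‖x - a • y‖ ^ 2 / (2 * b ^ 2)) • y ∂p

set_option synthInstance.maxHeartbeats 1000000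
set_option maxHeartbeats 1000000

noncomputable section Stmt7Aux

variable {E : Type*} [NormedAddCommGroup E] [InnerProductSpace ℝ E]

local notation "⟪" x ", " y "⟫" => @inner ℝ _ _ x y

def wfn (a b : ℝ) (x y : E) : ℝ := Real.exp (-‖x - a • y‖ ^ 2 / (2 * b ^ 2))

def phi (a b : ℝ) (x y : E) : E →L[ℝ] ℝ := (-(b ^ 2)⁻¹) • (innerSL ℝ (x - a • y))

lemma wfn_pos (a b : ℝ) (x y : E) : 0 < wfn a b x y := Real.exp_pos _

lemma wfn_le_one (a b : ℝ) (x y : E) : wfn a b x y ≤ 1 := by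
  rw [wfn, Real.exp_le_one_iff]
  apply div_nonpos_of_nonpos_of_nonneg
  · simp [sq_nonneg]
  · positivity

lemma phi_apply (a b : ℝ) (x y v : E) :
    phi a b x y v = -(b ^ 2)⁻¹ * (⟪x, v⟫ - a * ⟪y, v⟫) := by
  simp [phi, inner_sub_left, real_inner_smul_left]

lemma norm_phi (a b : ℝ) (x y : E) : ‖phi a b x y‖ = (b ^ 2)⁻¹ * ‖x - a • y‖ := by
  rw [phi]
  rw [norm_smul (-(b ^ 2)⁻¹) (innerSL ℝ (x - a • y)), innerSL_apply_norm, Real.norm_eq_abs,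
    abs_neg, abs_of_nonneg (inv_nonneg.2 (sq_nonneg b))]

lemma hasFDerivAt_wfn (a b : ℝ) (y x : E) :
    HasFDerivAt (fun x : E => wfn a b x y) (wfn a b x y • phi a b x y) x := by
  have h1 : HasFDerivAt (fun x : E => x - a • y) (ContinuousLinearMap.id ℝ E) x :=
    (hasFDerivAt_id x).sub_const _
  have h2 := (h1.inner ℝ h1).mul_const (-(2 * b ^ 2))⁻¹
  have h3 := h2.exp
  have hfe : (fun x : E => Real.exp (⟪x - a • y, x - a • y⟫ * (-(2 * b ^ 2))⁻¹))
      = fun x : E => wfn a b x y := by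
    funext z
    rw [wfn, real_inner_self_eq_norm_sq]
    ring_nf
  have hw : Real.exp (⟪x - a • y, x - a • y⟫ * (-(2 * b ^ 2))⁻¹) = wfn a b x y :=
    congrFun hfe x
  rw [hfe] at h3
  convert h3 using 1
  ext v
  simp only [ContinuousLinearMap.smul_apply, ContinuousLinearMap.coe_comp', Function.comp_apply,
    ContinuousLinearMap.prod_apply, fderivInnerCLM_apply, ContinuousLinearMap.coe_id', id_eq,
    smul_eq_mul, ContinuousLinearMap.coe_smul', Pi.smul_apply, hw]
  rw [phi_apply]
  simp only [inner_sub_left, inner_sub_right, real_inner_smul_left, real_inner_smul_right]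
  rw [real_inner_comm v x, real_inner_comm v y]
  field_simp
  ring

section Meas

set_option linter.unusedSectionVars false
variable [CompleteSpace E] [MeasurableSpace E] [OpensMeasurableSpace E]
  [SecondCountableTopology E]
variable {p : Measure E} [IsProbabilityMeasure p]

lemma cont_wfn (a b : ℝ) (x : E) : Continuous fun y => wfn a b x y := by
  unfold wfn; fun_prop

lemma cont_phi (a b : ℝ) (x : E) : Continuous fun y => phi a b x y := by
  refine Continuous.const_smul (g := fun y => innerSL ℝ (x - a • y)) ?_ (-(b ^ 2)⁻¹)
  exact (innerSL ℝ).continuous.comp (continuous_const.sub (continuous_id.const_smul a))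

lemma cont_wphi (a b : ℝ) (x : E) : Continuous fun y : E => wfn a b x y • phi a b x y :=
  (cont_wfn a b x).smul (cont_phi a b x)

lemma cont_wphiR (a b : ℝ) (x : E) :
    Continuous fun y : E => (wfn a b x y • phi a b x y).smulRight y :=
  isBoundedBilinearMap_smulRight.continuous.comp ((cont_wphi a b x).prodMk continuous_id)

lemma int_norm (hp2 : Integrable (fun y : E => ‖y‖ ^ 2) p) :
    Integrable (fun y : E => ‖y‖) p := by
  refine ((integrable_const (1 : ℝ)).add hp2).mono' continuous_norm.aestronglyMeasurable ?_
  filter_upwards with y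
  simp only [Pi.add_apply]
  rw [Real.norm_eq_abs, abs_of_nonneg (norm_nonneg y)]
  nlinarith [norm_nonneg y, sq_nonneg (‖y‖ - 1)]

lemma int_wfn (a b : ℝ) (x : E) : Integrable (fun y => wfn a b x y) p := by
  refine (integrable_const (1 : ℝ)).mono' (cont_wfn a b x).aestronglyMeasurable ?_
  filter_upwards with y
  rw [Real.norm_eq_abs, abs_of_pos (wfn_pos a b x y)]
  exact wfn_le_one a b x y

lemma int_wfn_smul (hp2 : Integrable (fun y : E => ‖y‖ ^ 2) p) (a b : ℝ) (x : E) :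
    Integrable (fun y => wfn a b x y • y) p := by
  refine (int_norm hp2).mono' ((cont_wfn a b x).smul continuous_id).aestronglyMeasurable ?_
  filter_upwards with y
  rw [norm_smul, Real.norm_eq_abs, abs_of_pos (wfn_pos a b x y)]
  exact mul_le_of_le_one_left (norm_nonneg y) (wfn_le_one a b x y)

lemma int_wfn_inner (hp2 : Integrable (fun y : E => ‖y‖ ^ 2) p) (a b : ℝ) (x v : E) :
    Integrable (fun y => wfn a b x y * ⟪y, v⟫) p := by
  refine ((int_norm hp2).mul_const ‖v‖).mono'
    (((cont_wfn a b x).mul (continuous_id.inner continuous_const)).aestronglyMeasurable) ?_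
  · filter_upwards with y
    rw [Real.norm_eq_abs, abs_mul, abs_of_pos (wfn_pos a b x y)]
    calc wfn a b x y * |⟪y, v⟫| ≤ 1 * |⟪y, v⟫| := by
          exact mul_le_mul_of_nonneg_right (wfn_le_one a b x y) (abs_nonneg _)
      _ = |⟪y, v⟫| := one_mul _
      _ ≤ ‖y‖ * ‖v‖ := abs_real_inner_le_norm y v

lemma int_wfn_inner_smul (hp2 : Integrable (fun y : E => ‖y‖ ^ 2) p) (a b : ℝ) (x v : E) :
    Integrable (fun y => (wfn a b x y * ⟪y, v⟫) • y) p := by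
  refine (hp2.mul_const ‖v‖).mono'
    ((((cont_wfn a b x).mul (continuous_id.inner continuous_const)).smul
      continuous_id).aestronglyMeasurable) ?_
  filter_upwards with y
  rw [norm_smul, Real.norm_eq_abs, abs_mul, abs_of_pos (wfn_pos a b x y)]
  calc wfn a b x y * |⟪y, v⟫| * ‖y‖ ≤ 1 * (‖y‖ * ‖v‖) * ‖y‖ := by
        apply mul_le_mul_of_nonneg_right _ (norm_nonneg y)
        exact mul_le_mul (wfn_le_one a b x y) (abs_real_inner_le_norm y v) (abs_nonneg _)
          zero_le_one
    _ = ‖y‖ ^ 2 * ‖v‖ := by ring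

section Deriv
set_option linter.unusedSectionVars false
variable [CompleteSpace E] [MeasurableSpace E] [OpensMeasurableSpace E]
  [SecondCountableTopology E]
variable {p : Measure E} [IsProbabilityMeasure p]

lemma norm_x'_le {x x' : E} (hx' : x' ∈ Metric.ball x 1) : ‖x'‖ ≤ ‖x‖ + 1 := by
  have h1 : dist x' x < 1 := Metric.mem_ball.mp hx'
  have h2 : ‖x'‖ - ‖x‖ ≤ ‖x' - x‖ := norm_sub_norm_le x' x
  rw [dist_eq_norm] at h1
  linarith

lemma norm_wphi_le (a b : ℝ) (x y x' : E) (hx' : x' ∈ Metric.ball x 1) :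
    ‖wfn a b x' y • phi a b x' y‖ ≤ (b ^ 2)⁻¹ * (‖x‖ + 1 + |a| * ‖y‖) := by
  rw [norm_smul (wfn a b x' y) (phi a b x' y), Real.norm_eq_abs,
    abs_of_pos (wfn_pos a b x' y), norm_phi]
  have h1 : ‖x' - a • y‖ ≤ ‖x‖ + 1 + |a| * ‖y‖ := by
    calc ‖x' - a • y‖ ≤ ‖x'‖ + ‖a • y‖ := norm_sub_le _ _
      _ ≤ ‖x‖ + 1 + |a| * ‖y‖ := by
          rw [norm_smul, Real.norm_eq_abs]
          exact add_le_add (norm_x'_le hx') le_rfl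
  calc wfn a b x' y * ((b ^ 2)⁻¹ * ‖x' - a • y‖) ≤ 1 * ((b ^ 2)⁻¹ * (‖x‖ + 1 + |a| * ‖y‖)) := by
        apply mul_le_mul (wfn_le_one a b x' y) _ (by positivity) zero_le_one
        exact mul_le_mul_of_nonneg_left h1 (inv_nonneg.2 (sq_nonneg b))
    _ = (b ^ 2)⁻¹ * (‖x‖ + 1 + |a| * ‖y‖) := one_mul _

lemma int_bound (hp2 : Integrable (fun y : E => ‖y‖ ^ 2) p) (a b : ℝ) (x : E) :
    Integrable (fun y : E => (b ^ 2)⁻¹ * (‖x‖ + 1 + |a| * ‖y‖)) p := by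
  have : Integrable (fun y : E => ‖x‖ + 1 + |a| * ‖y‖) p := by
    simpa using (integrable_const (‖x‖ + 1)).add ((int_norm hp2).const_mul |a|)
  exact this.const_mul _

lemma int_bound2 (hp2 : Integrable (fun y : E => ‖y‖ ^ 2) p) (a b : ℝ) (x : E) :
    Integrable (fun y : E => (b ^ 2)⁻¹ * (‖x‖ + 1 + |a| * ‖y‖) * ‖y‖) p := by
  have : Integrable (fun y : E => (b ^ 2)⁻¹ * ((‖x‖ + 1) * ‖y‖ + |a| * ‖y‖ ^ 2)) p := by
    exact (((int_norm hp2).const_mul (‖x‖ + 1)).add (hp2.const_mul |a|)).const_mul _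
  refine this.congr ?_
  filter_upwards with y
  ring

lemma int_wphi (hp2 : Integrable (fun y : E => ‖y‖ ^ 2) p) (a b : ℝ) (x : E) :
    Integrable (fun y => wfn a b x y • phi a b x y) p := by
  refine (int_bound hp2 a b x).mono' (cont_wphi a b x).aestronglyMeasurable ?_
  filter_upwards with y
  exact norm_wphi_le a b x y x (Metric.mem_ball_self one_pos)

lemma int_wphiR (hp2 : Integrable (fun y : E => ‖y‖ ^ 2) p) (a b : ℝ) (x : E) :
    Integrable (fun y => (wfn a b x y • phi a b x y).smulRight y) p := by
  refine (int_bound2 hp2 a b x).mono' (cont_wphiR a b x).aestronglyMeasurable ?_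
  filter_upwards with y
  rw [ContinuousLinearMap.norm_smulRight_apply]
  exact mul_le_mul_of_nonneg_right
    (norm_wphi_le a b x y x (Metric.mem_ball_self one_pos)) (norm_nonneg y)

lemma hasFDerivAt_Z (hp2 : Integrable (fun y : E => ‖y‖ ^ 2) p) (a b : ℝ) (x : E) :
    HasFDerivAt (fun x : E => ∫ y, wfn a b x y ∂p)
      (∫ y, wfn a b x y • phi a b x y ∂p) x := by
  refine hasFDerivAt_integral_of_dominated_of_fderiv_le
    (F' := fun x' y => wfn a b x' y • phi a b x' y)
    (bound := fun y : E => (b ^ 2)⁻¹ * (‖x‖ + 1 + |a| * ‖y‖)) (Metric.ball_mem_nhds x one_pos)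
    (Filter.Eventually.of_forall fun x' => (cont_wfn a b x').aestronglyMeasurable)
    (int_wfn a b x) (cont_wphi a b x).aestronglyMeasurable ?_ (int_bound hp2 a b x) ?_
  · filter_upwards with y x' hx'
    exact norm_wphi_le a b x y x' hx'
  · filter_upwards with y x' _
    exact hasFDerivAt_wfn a b y x'

lemma hasFDerivAt_N (hp2 : Integrable (fun y : E => ‖y‖ ^ 2) p) (a b : ℝ) (x : E) :
    HasFDerivAt (fun x : E => ∫ y, wfn a b x y • y ∂p)
      (∫ y, (wfn a b x y • phi a b x y).smulRight y ∂p) x := by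
  refine hasFDerivAt_integral_of_dominated_of_fderiv_le
    (F' := fun x' y => (wfn a b x' y • phi a b x' y).smulRight y)
    (bound := fun y : E => (b ^ 2)⁻¹ * (‖x‖ + 1 + |a| * ‖y‖) * ‖y‖) (Metric.ball_mem_nhds x one_pos)
    (Filter.Eventually.of_forall fun x' =>
      ((cont_wfn a b x').smul continuous_id).aestronglyMeasurable)
    (int_wfn_smul hp2 a b x) (cont_wphiR a b x).aestronglyMeasurable ?_
    (int_bound2 hp2 a b x) ?_
  · filter_upwards with y x' hx'
    rw [ContinuousLinearMap.norm_smulRight_apply]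
    exact mul_le_mul_of_nonneg_right (norm_wphi_le a b x y x' hx') (norm_nonneg y)
  · filter_upwards with y x' _
    exact (hasFDerivAt_wfn a b y x').smul_const y

end Deriv
end Meas
end Stmt7Aux


/-- For a probability measure `p` on `ℝ^d` with finite second moment and
`β_t > 0` (with `α_t ≥ 0`), the denoiser `m_t` is differentiable at every `x`, with Jacobian
`D = (α_t/β_t²) · Cov[X | X_t = x]`; explicitly, `D v` is `(α_t/β_t²)` times the posterior
mean of `⟨y - m_t(x), v⟩ (y - m_t(x))`.  In particular `D` is symmetric and positive
semidefinite (being a PSD covariance times `α_t/β_t² ≥ 0`). -/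
theorem stmt7 {d : ℕ} (p : Measure (EuclideanSpace ℝ (Fin d))) [IsProbabilityMeasure p]
    (hp2 : Integrable (fun y => ‖y‖ ^ 2) p)
    (αt βt : ℝ) (hβ : 0 < βt) (hα : 0 ≤ αt) (x : EuclideanSpace ℝ (Fin d)) :
    ∃ D : EuclideanSpace ℝ (Fin d) →L[ℝ] EuclideanSpace ℝ (Fin d),
      HasFDerivAt (denoiser p αt βt) D x ∧
      (∀ v, D v = (αt / βt ^ 2) •
        ((∫ y, Real.exp (-‖x - αt • y‖ ^ 2 / (2 * βt ^ 2)) ∂p)⁻¹ •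
          ∫ y, Real.exp (-‖x - αt • y‖ ^ 2 / (2 * βt ^ 2)) •
            ((inner ℝ (y - denoiser p αt βt x) v : ℝ) • (y - denoiser p αt βt x)) ∂p)) ∧
      (∀ u v, (inner ℝ u (D v) : ℝ) = inner ℝ (D u) v) ∧
      (∀ v, 0 ≤ (inner ℝ v (D v) : ℝ)) := by
  have hb : βt ≠ 0 := hβ.ne'
  have hb2 : (βt ^ 2 : ℝ) ≠ 0 := pow_ne_zero 2 hb
  set m := denoiser p αt βt x with hm
  set Z : ℝ := ∫ y, wfn αt βt x y ∂p with hZ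
  set N := ∫ y, wfn αt βt x y • y ∂p with hN
  set Z' := ∫ y, wfn αt βt x y • phi αt βt x y ∂p with hZ'
  set N' := ∫ y, (wfn αt βt x y • phi αt βt x y).smulRight y ∂p with hN'
  have hZpos : 0 < Z := by
    rw [hZ]
    exact integral_exp_pos (f := fun y => -‖x - αt • y‖ ^ 2 / (2 * βt ^ 2)) (int_wfn αt βt x)
  have hZne : Z ≠ 0 := hZpos.ne'
  have hmeq : m = Z⁻¹ • N := hm.trans rfl
  have hZderiv : HasFDerivAt (fun x => ∫ y, wfn αt βt x y ∂p) Z' x := hasFDerivAt_Z hp2 αt βt x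
  have hNderiv : HasFDerivAt (fun x => ∫ y, wfn αt βt x y • y ∂p) N' x :=
    hasFDerivAt_N hp2 αt βt x
  have hinv : HasFDerivAt (fun x : EuclideanSpace ℝ (Fin d) => (∫ y, wfn αt βt x y ∂p)⁻¹)
      ((-(Z ^ 2)⁻¹) • Z') x := (hasDerivAt_inv hZne).comp_hasFDerivAt x hZderiv
  set D : EuclideanSpace ℝ (Fin d) →L[ℝ] EuclideanSpace ℝ (Fin d) :=
    Z⁻¹ • N' + ((-(Z ^ 2)⁻¹) • Z').smulRight N with hD
  have hden : HasFDerivAt (denoiser p αt βt) D x := hinv.smul hNderiv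
  have hDv : ∀ v, D v = Z⁻¹ • (N' v) + (-(Z ^ 2)⁻¹ * (Z' v)) • N := by
    intro v
    rw [hD]
    simp [ContinuousLinearMap.smulRight_apply]
  -- formula, wfn form
  have hform : ∀ v, D v = (αt / βt ^ 2) •
      (Z⁻¹ • ∫ y, wfn αt βt x y • (((inner ℝ (y - m) v : ℝ)) • (y - m)) ∂p) := by
    intro v
    have hZ'v : Z' v = (βt ^ 2)⁻¹ * αt * (∫ y, wfn αt βt x y * (inner ℝ y v : ℝ) ∂p)
        - (βt ^ 2)⁻¹ * (inner ℝ x v : ℝ) * Z := by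
      rw [hZ', ContinuousLinearMap.integral_apply (int_wphi hp2 αt βt x) v]
      have he : (fun y => (wfn αt βt x y • phi αt βt x y) v)
          = fun y => ((βt ^ 2)⁻¹ * αt) * (wfn αt βt x y * (inner ℝ y v : ℝ))
              - ((βt ^ 2)⁻¹ * (inner ℝ x v : ℝ)) * wfn αt βt x y := by
        funext y
        simp only [ContinuousLinearMap.smul_apply, smul_eq_mul, phi_apply]
        ring
      rw [he, integral_sub ((int_wfn_inner hp2 αt βt x v).const_mul _)
        ((int_wfn αt βt x).const_mul _), integral_const_mul, integral_const_mul, ← hZ]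
    have hN'v : N' v = ((βt ^ 2)⁻¹ * αt) • (∫ y, (wfn αt βt x y * (inner ℝ y v : ℝ)) • y ∂p)
        - ((βt ^ 2)⁻¹ * (inner ℝ x v : ℝ)) • N := by
      rw [hN', ContinuousLinearMap.integral_apply (int_wphiR hp2 αt βt x) v]
      have he : (fun y => ((wfn αt βt x y • phi αt βt x y).smulRight y) v)
          = fun y => ((βt ^ 2)⁻¹ * αt) • ((wfn αt βt x y * (inner ℝ y v : ℝ)) • y)
              - ((βt ^ 2)⁻¹ * (inner ℝ x v : ℝ)) • (wfn αt βt x y • y) := by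
        funext y
        simp only [ContinuousLinearMap.smulRight_apply, ContinuousLinearMap.smul_apply,
          smul_eq_mul, phi_apply]
        match_scalars <;> ring
      have int1 : Integrable (fun y => ((βt ^ 2)⁻¹ * αt) •
          ((wfn αt βt x y * (inner ℝ y v : ℝ)) • y)) p :=
        Integrable.smul ((βt ^ 2)⁻¹ * αt) (int_wfn_inner_smul hp2 αt βt x v)
      have int2 : Integrable (fun y => ((βt ^ 2)⁻¹ * (inner ℝ x v : ℝ)) •
          (wfn αt βt x y • y)) p :=
          Integrable.smul ((βt ^ 2)⁻¹ * (inner ℝ x v : ℝ)) (int_wfn_smul hp2 αt βt x)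
      rw [he, integral_sub int1 int2, integral_smul, integral_smul, ← hN]
    have int1 : Integrable (fun y => (wfn αt βt x y * (inner ℝ y v : ℝ)) • y) p :=
      int_wfn_inner_smul hp2 αt βt x v
    have int2 : Integrable (fun y => ((inner ℝ m v : ℝ)) • (wfn αt βt x y • y)) p :=
      Integrable.smul (inner ℝ m v : ℝ) (int_wfn_smul hp2 αt βt x)
    have int3 : Integrable (fun y => (wfn αt βt x y * (inner ℝ y v : ℝ)) • m) p :=
      (int_wfn_inner hp2 αt βt x v).smul_const m
    have int4 : Integrable (fun y => ((inner ℝ m v : ℝ) * wfn αt βt x y) • m) p :=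
      ((int_wfn αt βt x).const_mul _).smul_const m
    have int12 : Integrable (fun y => (wfn αt βt x y * (inner ℝ y v : ℝ)) • y
        - ((inner ℝ m v : ℝ)) • (wfn αt βt x y • y)) p := int1.sub int2
    have int34 : Integrable (fun y => (wfn αt βt x y * (inner ℝ y v : ℝ)) • m
        - ((inner ℝ m v : ℝ) * wfn αt βt x y) • m) p := int3.sub int4
    have hI : (∫ y, wfn αt βt x y • (((inner ℝ (y - m) v : ℝ)) • (y - m)) ∂p)
        = (∫ y, (wfn αt βt x y * (inner ℝ y v : ℝ)) • y ∂p)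
          - (∫ y, wfn αt βt x y * (inner ℝ y v : ℝ) ∂p) • m := by
      have hfun : (fun y => wfn αt βt x y • (((inner ℝ (y - m) v : ℝ)) • (y - m)))
          = fun y => ((wfn αt βt x y * (inner ℝ y v : ℝ)) • y
                - (inner ℝ m v : ℝ) • (wfn αt βt x y • y))
              - ((wfn αt βt x y * (inner ℝ y v : ℝ)) • m
                - ((inner ℝ m v : ℝ) * wfn αt βt x y) • m) := by
        funext y
        rw [inner_sub_left]
        match_scalars <;> ring
      rw [hfun, integral_sub int12 int34, integral_sub int1 int2, integral_sub int3 int4,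
        integral_smul, integral_smul_const, integral_smul_const, integral_const_mul, ← hN, ← hZ]
      rw [hmeq, real_inner_smul_left]
      match_scalars <;> (field_simp; try ring)
    rw [hDv v, hZ'v, hN'v, hI, hmeq]
    match_scalars <;> (field_simp; try ring; try tauto)
  have hIntcov : ∀ v, Integrable
      (fun y => wfn αt βt x y • (((inner ℝ (y - m) v : ℝ)) • (y - m))) p := by
    intro v
    have hcont : Continuous fun y : EuclideanSpace ℝ (Fin d) =>
        wfn αt βt x y • (((inner ℝ (y - m) v : ℝ)) • (y - m)) :=
      (cont_wfn αt βt x).smul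
        (((continuous_id.sub continuous_const).inner (𝕜 := ℝ) continuous_const).smul
          (continuous_id.sub continuous_const))
    refine (((hp2.const_mul 2).add (integrable_const (2 * ‖m‖ ^ 2))).mul_const
      ‖v‖).mono' hcont.aestronglyMeasurable ?_
    filter_upwards with y
    simp only [Pi.add_apply]
    rw [norm_smul, norm_smul, Real.norm_eq_abs, Real.norm_eq_abs,
      abs_of_pos (wfn_pos αt βt x y)]
    have h1 : |(inner ℝ (y - m) v : ℝ)| ≤ ‖y - m‖ * ‖v‖ := abs_real_inner_le_norm _ _
    have h2 : ‖y - m‖ ≤ ‖y‖ + ‖m‖ := norm_sub_le _ _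
    have h5 := norm_nonneg (y - m)
    calc wfn αt βt x y * (|(inner ℝ (y - m) v : ℝ)| * ‖y - m‖)
        ≤ 1 * ((‖y - m‖ * ‖v‖) * ‖y - m‖) := by
          apply mul_le_mul (wfn_le_one αt βt x y) (mul_le_mul_of_nonneg_right h1 h5)
            (by positivity) zero_le_one
      _ = ‖y - m‖ ^ 2 * ‖v‖ := by ring
      _ ≤ (2 * ‖y‖ ^ 2 + 2 * ‖m‖ ^ 2) * ‖v‖ := by
          apply mul_le_mul_of_nonneg_right _ (norm_nonneg v)
          calc ‖y - m‖ ^ 2 ≤ (‖y‖ + ‖m‖) ^ 2 := by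
                apply pow_le_pow_left₀ h5 h2
            _ ≤ 2 * ‖y‖ ^ 2 + 2 * ‖m‖ ^ 2 := by nlinarith [sq_nonneg (‖y‖ - ‖m‖)]
  have hinner : ∀ u v, (inner ℝ u (D v) : ℝ) = (αt / βt ^ 2) *
      (Z⁻¹ * ∫ y, wfn αt βt x y *
        (((inner ℝ (y - m) v : ℝ)) * (inner ℝ u (y - m) : ℝ)) ∂p) := by
    intro u v
    rw [hform v, real_inner_smul_right, real_inner_smul_right, ← integral_inner (hIntcov v) u]
    congr 2
    refine integral_congr_ae (Filter.Eventually.of_forall fun y => ?_)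
    simp only [real_inner_smul_right]
  refine ⟨D, hden, hform, ?_, ?_⟩
  · intro u v
    have hint : (∫ y, wfn αt βt x y *
          (((inner ℝ (y - m) v : ℝ)) * (inner ℝ u (y - m) : ℝ)) ∂p)
        = ∫ y, wfn αt βt x y *
          (((inner ℝ (y - m) u : ℝ)) * (inner ℝ v (y - m) : ℝ)) ∂p := by
      refine integral_congr_ae (Filter.Eventually.of_forall fun y => ?_)
      simp only [real_inner_comm (y - m) u, real_inner_comm (y - m) v]
      ring
    rw [hinner u v, hint, ← hinner v u]
    exact (real_inner_comm v (D u)).symm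
  · intro v
    rw [hinner v v]
    apply mul_nonneg (div_nonneg hα (sq_nonneg βt))
    apply mul_nonneg (inv_nonneg.2 hZpos.le)
    apply integral_nonneg
    intro y
    refine mul_nonneg (wfn_pos αt βt x y).le ?_
    rw [real_inner_comm (y - m) v]
    exact mul_self_nonneg _
end

section
/- Let p be a probability measure on ℝ^d supported on the linear subspace ℝ^m × {0} ⊆ ℝ^d (0 < m ≤ d), writing points as x = (u, v) with u ∈ ℝ^m, v ∈ ℝ^{d-m}. Assume the flow matching ODE is well defined. Then for any initial point x₀ = (u₀, v₀), the flow matching ODE trajectory in ℝ^d with data distribution p and schedules α_t, β_t is given by x_t = (u_t, β_t v₀), where (u_t) is the flow matching ODE trajectory in ℝ^m with initial point u₀, data distribution p regarded as a measure on ℝ^m, and the same schedules. -/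
open MeasureTheory

/-- The flow matching vector field
`u_t(x) = (β̇_t/β_t) x + ((α̇_t β_t - α_t β̇_t)/β_t) m_t(x)`. -/
noncomputable def vecField {d : ℕ} (p : Measure (EuclideanSpace ℝ (Fin d)))
    (α β : ℝ → ℝ) (t : ℝ) (x : EuclideanSpace ℝ (Fin d)) : EuclideanSpace ℝ (Fin d) :=
  (deriv β t / β t) • x +
    ((deriv α t * β t - α t * deriv β t) / β t) • denoiser p (α t) (β t) x

/-- The isometric identification `ℝ^m × ℝ^k ≅ ℝ^{m+k}`, `(u, v) ↦ (u, v)`. -/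
noncomputable def pairE {m k : ℕ} (u : EuclideanSpace ℝ (Fin m))
    (v : EuclideanSpace ℝ (Fin k)) : EuclideanSpace ℝ (Fin (m + k)) :=
  (WithLp.equiv 2 (∀ _ : Fin (m + k), ℝ)).symm
    (fun i => Fin.addCases (motive := fun _ => ℝ) (fun j => u j) (fun j => v j) i)

namespace Aux15

variable {m k : ℕ}

lemma pairE_apply (u : EuclideanSpace ℝ (Fin m)) (v : EuclideanSpace ℝ (Fin k)) (i : Fin (m + k)) :
    pairE u v i = Fin.addCases (motive := fun _ => ℝ) (fun j => u j) (fun j => v j) i := rfl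

noncomputable def P : (EuclideanSpace ℝ (Fin m)) × (EuclideanSpace ℝ (Fin k)) →ₗ[ℝ]
    EuclideanSpace ℝ (Fin (m + k)) where
  toFun x := pairE x.1 x.2
  map_add' x y := by
    ext i
    induction i using Fin.addCases with
    | left j => simp [pairE_apply, PiLp.add_apply]
    | right j => simp [pairE_apply, PiLp.add_apply]
  map_smul' c x := by
    ext i
    induction i using Fin.addCases with
    | left j => simp [pairE_apply, PiLp.smul_apply]
    | right j => simp [pairE_apply, PiLp.smul_apply]

lemma P_apply (x : (EuclideanSpace ℝ (Fin m)) × (EuclideanSpace ℝ (Fin k))) :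
    P x = pairE x.1 x.2 := rfl

lemma norm_pairE_sq (u : EuclideanSpace ℝ (Fin m)) (v : EuclideanSpace ℝ (Fin k)) :
    ‖pairE u v‖ ^ 2 = ‖u‖ ^ 2 + ‖v‖ ^ 2 := by
  have h1 : ∀ {n : ℕ} (x : EuclideanSpace ℝ (Fin n)), ‖x‖ ^ 2 = ∑ i, ‖x i‖ ^ 2 := by
    intro n x
    rw [EuclideanSpace.norm_eq, Real.sq_sqrt]
    positivity
  rw [h1, h1, h1, Fin.sum_univ_add]
  simp [pairE_apply]

/-- The inclusion `y ↦ (y, 0)` as a linear isometry. -/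
noncomputable def ι : EuclideanSpace ℝ (Fin m) →ₗᵢ[ℝ] EuclideanSpace ℝ (Fin (m + k)) where
  toLinearMap := P.comp (LinearMap.inl ℝ _ _)
  norm_map' y := by
    have : ‖pairE y (0 : EuclideanSpace ℝ (Fin k))‖ ^ 2 = ‖y‖ ^ 2 := by
      rw [norm_pairE_sq]; simp
    have h := sq_eq_sq₀ (norm_nonneg (pairE y (0 : EuclideanSpace ℝ (Fin k)))) (norm_nonneg y)
    simpa [LinearMap.comp_apply, P_apply] using h.mp (by simpa [sq] using this)

lemma ι_apply (y : EuclideanSpace ℝ (Fin m)) :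
    ι y = pairE y (0 : EuclideanSpace ℝ (Fin k)) := rfl

lemma pairE_sub_smul (x : EuclideanSpace ℝ (Fin m)) (v : EuclideanSpace ℝ (Fin k))
    (a : ℝ) (y : EuclideanSpace ℝ (Fin m)) :
    pairE x v - a • pairE y 0 = pairE (x - a • y) v := by
  have := P.map_sub (x, v) (a • (y, (0 : EuclideanSpace ℝ (Fin k))))
  have h2 := P.map_smul a (y, (0 : EuclideanSpace ℝ (Fin k)))
  simp only [P_apply, Prod.smul_mk, smul_zero] at this h2
  rw [← h2, ← this]
  simp

lemma exp_factor (x : EuclideanSpace ℝ (Fin m)) (v : EuclideanSpace ℝ (Fin k))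
    (a b : ℝ) (y : EuclideanSpace ℝ (Fin m)) :
    Real.exp (-‖pairE x v - a • pairE y 0‖ ^ 2 / (2 * b ^ 2)) =
      Real.exp (-‖v‖ ^ 2 / (2 * b ^ 2)) * Real.exp (-‖x - a • y‖ ^ 2 / (2 * b ^ 2)) := by
  rw [pairE_sub_smul, norm_pairE_sq, ← Real.exp_add]
  congr 1
  ring


lemma pairE_cont : Continuous fun y : EuclideanSpace ℝ (Fin m) =>
    pairE y (0 : EuclideanSpace ℝ (Fin k)) := by
  have := (ι (m := m) (k := k)).continuous
  exact this

lemma denoiser_map (p : Measure (EuclideanSpace ℝ (Fin m))) [IsProbabilityMeasure p]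
    (a b : ℝ) (x : EuclideanSpace ℝ (Fin m)) (v : EuclideanSpace ℝ (Fin k)) :
    denoiser (p.map fun w => pairE w (0 : EuclideanSpace ℝ (Fin k))) a b (pairE x v)
      = pairE (denoiser p a b x) 0 := by
  set c := Real.exp (-‖v‖ ^ 2 / (2 * b ^ 2)) with hc
  have hcpos : 0 < c := Real.exp_pos _
  have hmap : AEMeasurable (fun w : EuclideanSpace ℝ (Fin m) =>
      pairE w (0 : EuclideanSpace ℝ (Fin k))) p :=
    pairE_cont.measurable.aemeasurable
  have hcont1 : Continuous fun y : EuclideanSpace ℝ (Fin (m + k)) =>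
      Real.exp (-‖pairE x v - a • y‖ ^ 2 / (2 * b ^ 2)) := by fun_prop
  have hcont2 : Continuous fun y : EuclideanSpace ℝ (Fin (m + k)) =>
      Real.exp (-‖pairE x v - a • y‖ ^ 2 / (2 * b ^ 2)) • y := by fun_prop
  have hD : (∫ y, Real.exp (-‖pairE x v - a • y‖ ^ 2 / (2 * b ^ 2))
        ∂(p.map fun w => pairE w (0 : EuclideanSpace ℝ (Fin k)))) =
      c * ∫ w, Real.exp (-‖x - a • w‖ ^ 2 / (2 * b ^ 2)) ∂p := by
    rw [integral_map hmap hcont1.aestronglyMeasurable]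
    simp_rw [exp_factor]
    rw [integral_const_mul, hc]
  have hN : (∫ y, Real.exp (-‖pairE x v - a • y‖ ^ 2 / (2 * b ^ 2)) • y
        ∂(p.map fun w => pairE w (0 : EuclideanSpace ℝ (Fin k)))) =
      c • pairE (∫ w, Real.exp (-‖x - a • w‖ ^ 2 / (2 * b ^ 2)) • w ∂p) 0 := by
    rw [integral_map hmap hcont2.aestronglyMeasurable]
    simp_rw [exp_factor]
    have : ∀ w : EuclideanSpace ℝ (Fin m),
        (c * Real.exp (-‖x - a • w‖ ^ 2 / (2 * b ^ 2))) • pairE w 0 =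
        c • (ι (k := k) (Real.exp (-‖x - a • w‖ ^ 2 / (2 * b ^ 2)) • w)) := by
      intro w
      rw [ι.map_smul, ι_apply, mul_smul]
    simp_rw [← hc, this]
    rw [integral_smul, ι.integral_comp_comm, ι_apply]
  rw [denoiser, hD, hN, denoiser, ← ι_apply, ← ι_apply, ← ι.map_smul, ← ι.map_smul,
    smul_smul]
  congr 2
  rw [mul_inv, mul_comm c⁻¹, mul_assoc, inv_mul_cancel₀ hcpos.ne', mul_one]

lemma vecField_map (p : Measure (EuclideanSpace ℝ (Fin m))) [IsProbabilityMeasure p]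
    (α β : ℝ → ℝ) (t : ℝ) (hβ : β t ≠ 0) (x : EuclideanSpace ℝ (Fin m))
    (v₀ : EuclideanSpace ℝ (Fin k)) :
    vecField (p.map fun w => pairE w (0 : EuclideanSpace ℝ (Fin k))) α β t
      (pairE x (β t • v₀)) = pairE (vecField p α β t x) (deriv β t • v₀) := by
  rw [vecField, denoiser_map]
  have h1 : ∀ (r : ℝ) (a : EuclideanSpace ℝ (Fin m)) (b : EuclideanSpace ℝ (Fin k)),
      r • pairE a b = pairE (r • a) (r • b) := by
    intro r a b
    have := P.map_smul r (a, b)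
    simpa [P_apply, Prod.smul_mk] using this.symm
  have h2 : ∀ (a a' : EuclideanSpace ℝ (Fin m)) (b b' : EuclideanSpace ℝ (Fin k)),
      pairE a b + pairE a' b' = pairE (a + a') (b + b') := by
    intro a a' b b'
    have := P.map_add (a, b) (a', b')
    simpa [P_apply] using this.symm
  rw [h1, h1, h2, vecField]
  rw [smul_zero, add_zero, smul_smul, div_mul_cancel₀ _ hβ]


noncomputable def Pc : (EuclideanSpace ℝ (Fin m)) × (EuclideanSpace ℝ (Fin k)) →L[ℝ]
    EuclideanSpace ℝ (Fin (m + k)) := LinearMap.toContinuousLinearMap P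

lemma Pc_apply (x : (EuclideanSpace ℝ (Fin m)) × (EuclideanSpace ℝ (Fin k))) :
    Pc x = pairE x.1 x.2 := rfl

end Aux15

/-- Let `p` be a probability measure on `ℝ^m` and view it on
`ℝ^d = ℝ^m × ℝ^k` (supported on the subspace `ℝ^m × {0}`) as the pushforward
`p̄ = p.map (u ↦ (u, 0))`.  If `u` is a trajectory of the flow matching ODE in `ℝ^m` with
data `p`, schedules `α, β` and `u 0 = u₀` (the ODE being well defined), then for any
`v₀ ∈ ℝ^k` the curve `t ↦ (u_t, β_t v₀)` is a trajectory of the flow matching ODE in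
`ℝ^{m+k}` with data `p̄` and the same schedules, and (since `β_0 = 1`) it starts at
`(u₀, v₀)`. -/
theorem stmt15 {m k : ℕ} (hm : 0 < m) (p : Measure (EuclideanSpace ℝ (Fin m)))
    [IsProbabilityMeasure p]
    (α β : ℝ → ℝ) (hαc : ContDiff ℝ (⊤ : ℕ∞) α) (hβc : ContDiff ℝ (⊤ : ℕ∞) β)
    (hβpos : ∀ t ∈ Set.Ico (0 : ℝ) 1, 0 < β t) (hβ0 : β 0 = 1)
    (u : ℝ → EuclideanSpace ℝ (Fin m)) (u₀ : EuclideanSpace ℝ (Fin m))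
    (v₀ : EuclideanSpace ℝ (Fin k)) (hu0 : u 0 = u₀)
    (hODE : ∀ t ∈ Set.Ico (0 : ℝ) 1, HasDerivAt u (vecField p α β t (u t)) t) :
    (∀ t ∈ Set.Ico (0 : ℝ) 1,
        HasDerivAt (fun s => pairE (u s) (β s • v₀))
          (vecField (p.map fun w => pairE w (0 : EuclideanSpace ℝ (Fin k))) α β t
            (pairE (u t) (β t • v₀))) t) ∧
    pairE (u 0) (β 0 • v₀) = pairE u₀ v₀ := by
  constructor
  · intro t ht
    have hβ := (hβpos t ht).ne'
    have hu' := hODE t ht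
    have hβ' : HasDerivAt β (deriv β t) t :=
      ((hβc.differentiable (by simp)) t).hasDerivAt
    have hv : HasDerivAt (fun s => β s • v₀) (deriv β t • v₀) t := hβ'.smul_const v₀
    have hpair : HasDerivAt (fun s => (u s, β s • v₀))
        (vecField p α β t (u t), deriv β t • v₀) t := hu'.prodMk hv
    have hP : HasDerivAt (fun s => Aux15.Pc (u s, β s • v₀))
        (Aux15.Pc (vecField p α β t (u t), deriv β t • v₀)) t :=
      Aux15.Pc.hasFDerivAt.comp_hasDerivAt t hpair
    rw [Aux15.vecField_map p α β t hβ (u t) v₀]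
    exact hP
  · rw [hu0, hβ0, one_smul]
end
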